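/- Let δ = ±1, a ∈ ℝ, τ > 0, h⁺, h⁻ > 0, t, x, x̂ ∈ ℝ, Δx = x̂ − x, and let u, u₊, u₋, û > 0 satisfy both equations of the invariant difference model for u_t = u_xx + δu ln u. Define the transformed data: x* = x + 2a·e^{δt}, x̂* = x̂ + 2a·e^{δ(t+τ)} (so Δx* = Δx + 2a·e^{δt}(e^{δτ} − 1)), steps h⁺, h⁻ and τ unchanged, and u* = u·exp(−δe^{δt}(ax + a²e^{δt})), u₊* = u₊·exp(−δe^{δt}(a(x+h⁺) + a²e^{δt})), u₋* = u₋·exp(−δe^{δt}(a(x−h⁻) + a²e^{δt})), û* = û·exp(−δe^{δ(t+τ)}(a·x̂ + a²e^{δ(t+τ)})). Then the transformed data again satisfy both equations of the model. That is, the scheme is invariant under the one-parameter group generated by X₃ = 2e^{δt}∂/∂x − δe^{δt}xu∂/∂u. -/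
import Mathlib


open Real

/-- The invariant difference model for the semilinear heat equation
`u_t = u_xx + δu ln u` on a moving mesh with flat time layers:
equation (i) `δΔx + 2(e^{δτ}−1)[(h⁻/(h⁺+h⁻))(ln u)_x + (h⁺/(h⁺+h⁻))(ln u)_x̄] = 0`
and equation (ii)
`δ(Δx)² + 4(1−e^{−δτ})(ln û − e^{δτ}ln u) = (8/δ)(e^{δτ}−1)²/(h⁺+h⁻)·[(ln u)_x − (ln u)_x̄]`,
where `(ln u)_x = (ln u₊ − ln u)/h⁺` and `(ln u)_x̄ = (ln u − ln u₋)/h⁻`. -/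
def SemilinearHeatModel (del τ hp hm Δx u up um uh : ℝ) : Prop :=
  (del * Δx + 2 * (Real.exp (del * τ) - 1)
      * ((hm / (hp + hm)) * ((Real.log up - Real.log u) / hp)
        + (hp / (hp + hm)) * ((Real.log u - Real.log um) / hm)) = 0) ∧
  (del * Δx ^ 2 + 4 * (1 - Real.exp (-(del * τ)))
      * (Real.log uh - Real.exp (del * τ) * Real.log u)
    = (8 / del) * (Real.exp (del * τ) - 1) ^ 2 / (hp + hm)
        * ((Real.log up - Real.log u) / hp - (Real.log u - Real.log um) / hm))

/-- The invariant difference model for `u_t = u_xx + δu ln u` admits the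
one-parameter group generated by `X₃ = 2e^{δt}∂/∂x − δe^{δt}xu∂/∂u`:
shifting `x` by `2a e^{δt}` and `x̂` by `2a e^{δ(t+τ)}` (so `Δx` by
`2a e^{δt}(e^{δτ}−1)`), keeping the steps fixed, and multiplying the solution
values by the corresponding exponential factors, maps solutions to solutions. -/
theorem semilinear_heat_model_X3_invariant
    (del : ℝ) (hdel : del = 1 ∨ del = -1) (a : ℝ)
    (τ hp hm t x xh Δx : ℝ) (hτ : 0 < τ) (hhp : 0 < hp) (hhm : 0 < hm)
    (hΔx : Δx = xh - x)
    (u up um uh : ℝ) (hu : 0 < u) (hup : 0 < up) (hum : 0 < um) (huh : 0 < uh)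
    (hmodel : SemilinearHeatModel del τ hp hm Δx u up um uh) :
    SemilinearHeatModel del τ hp hm
      ((xh + 2 * a * Real.exp (del * (t + τ))) - (x + 2 * a * Real.exp (del * t)))
      (u * Real.exp (-(del * Real.exp (del * t)
          * (a * x + a ^ 2 * Real.exp (del * t)))))
      (up * Real.exp (-(del * Real.exp (del * t)
          * (a * (x + hp) + a ^ 2 * Real.exp (del * t)))))
      (um * Real.exp (-(del * Real.exp (del * t)
          * (a * (x - hm) + a ^ 2 * Real.exp (del * t)))))
      (uh * Real.exp (-(del * Real.exp (del * (t + τ))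
          * (a * xh + a ^ 2 * Real.exp (del * (t + τ)))))) := by
  obtain ⟨h1, h2⟩ := hmodel
  have lg : ∀ v w : ℝ, 0 < v → Real.log (v * Real.exp w) = Real.log v + w := by
    intro v w hv; rw [Real.log_mul hv.ne' (Real.exp_ne_zero _), Real.log_exp]
  have hF : Real.exp (del * τ) * Real.exp (-(del * τ)) = 1 := by
    rw [← Real.exp_add]; simp
  have hp' : hp * hp⁻¹ = 1 := mul_inv_cancel₀ hhp.ne'
  have hm' : hm * hm⁻¹ = 1 := mul_inv_cancel₀ hhm.ne'
  have hS : (hp + hm) * (hp + hm)⁻¹ = 1 := mul_inv_cancel₀ (by positivity)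
  have hEF : Real.exp (del * (t + τ)) = Real.exp (del * t) * Real.exp (del * τ) := by
    rw [← Real.exp_add]; ring_nf
  subst hΔx
  constructor
  · rw [lg _ _ hu, lg _ _ hup, lg _ _ hum, hEF]
    linear_combination h1
      - (2 * (Real.exp (del*τ) - 1) * del * Real.exp (del*t) * a * hm / (hp + hm)) * hp'
      - (2 * (Real.exp (del*τ) - 1) * del * Real.exp (del*t) * a * hp / (hp + hm)) * hm'
      - (2 * (Real.exp (del*τ) - 1) * del * Real.exp (del*t) * a) * hS
  · rw [lg _ _ hu, lg _ _ hup, lg _ _ hum, lg _ _ huh, hEF]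
    linear_combination h2
      + (4 * del * Real.exp (del*t) * a * (xh - x)
          + 4 * del * a^2 * (Real.exp (del*t))^2 * (Real.exp (del*τ) - 1)) * hF
      + ((8/del) * (Real.exp (del*τ) - 1)^2 / (hp + hm)
          * del * Real.exp (del*t) * a) * hp'
      - ((8/del) * (Real.exp (del*τ) - 1)^2 / (hp + hm)
          * del * Real.exp (del*t) * a) * hm'
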